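/- Let F = ⟨a, b⟩ be the free group of rank 2 and let φ : F → F be the automorphism determined by a ↦ b and b ↦ ab². Then the set of nonzero eigenvalues of φ is Λ(φ) = {1 + √2, 1 − √2}, and for every finite-index subgroup H of F with φ(H) ⊆ H, both 1 + √2 and 1 − √2 are eigenvalues of the restriction φ|_H. -/

import Mathlib

/-!
On the abelianization `ℤ²` the map `φ` acts by `a ↦ b, b ↦ a + 2b`, so `(φ^ab)² = 2 φ^ab + 1`:
every eigenvalue is a root of `X² - 2X - 1`, and for either root `μ` the vector `a + μ b` is an
eigenvector. If `H` has finite index, some power of every element of `F` lies in `H`, so over `ℂ`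
(where one may divide by the exponent) the map `H^ab ⊗ ℂ → F^ab ⊗ ℂ` induced by the inclusion is
surjective. It intertwines `φ|_H` with `φ`, and an eigenvalue of the map induced on a quotient of
a finite-dimensional space is an eigenvalue of the map itself.
-/

open scoped TensorProduct

/-- The complex linear endomorphism of `(G/[G,G]) ⊗_ℤ ℂ` induced by a group
endomorphism `φ : G →* G`. -/
noncomputable def inducedEnd {G : Type*} [Group G] (φ : G →* G) :
    Module.End ℂ (ℂ ⊗[ℤ] Additive (Abelianization G)) :=
  ((MonoidHom.toAdditive (Abelianization.map φ)).toIntLinearMap).baseChange ℂ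

/-- `Λ(φ)`: the set of nonzero eigenvalues of the induced map on
`(G/[G,G]) ⊗_ℤ ℂ`. -/
noncomputable def specNZ {G : Type*} [Group G] (φ : G →* G) : Set ℂ :=
  {μ : ℂ | μ ≠ 0 ∧ Module.End.HasEigenvalue (inducedEnd φ) μ}

/-- The restriction of an endomorphism `φ` to a `φ`-invariant subgroup `H`,
as an endomorphism of `H`. -/
def restrictHom {G : Type*} [Group G] (φ : G →* G) (H : Subgroup G)
    (hinv : ∀ x ∈ H, φ x ∈ H) : H →* H :=
  (φ.comp H.subtype).codRestrict H fun x => hinv x x.2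

/-- The endomorphism of the free group on two generators `a = of false`,
`b = of true` determined by `a ↦ b` and `b ↦ a b²`. -/
def cassonAut : FreeGroup Bool →* FreeGroup Bool :=
  FreeGroup.lift fun i =>
    if i then FreeGroup.of false * FreeGroup.of true ^ 2 else FreeGroup.of true

theorem Module.End.HasEigenvalue.of_surjective_of_comp_eq {K V W : Type*} [Field K]
    [AddCommGroup V] [Module K V] [AddCommGroup W] [Module K W] [FiniteDimensional K V]
    {f : Module.End K W} {g : Module.End K V} {π : V →ₗ[K] W} (hπ : Function.Surjective π)
    (hfg : π ∘ₗ g = f ∘ₗ π) {μ : K} (hf : f.HasEigenvalue μ) : g.HasEigenvalue μ := by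
  have : FiniteDimensional K W := Module.Finite.of_surjective π hπ
  rw [Module.End.hasEigenvalue_iff_mem_spectrum] at hf ⊢
  contrapose! hf
  rw [spectrum.notMem_iff, Module.End.isUnit_iff] at hf ⊢
  have hcomm : π ∘ₗ (algebraMap K _ μ - g) = (algebraMap K _ μ - f) ∘ₗ π := by
    rw [LinearMap.comp_sub, LinearMap.sub_comp, hfg]
    ext x
    simp [Module.algebraMap_end_apply]
  have hsurj : Function.Surjective (algebraMap K (Module.End K W) μ - f) := by
    refine Function.Surjective.of_comp (g := π) ?_
    rw [← LinearMap.coe_comp, ← hcomm, LinearMap.coe_comp]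
    exact hπ.comp hf.surjective
  exact ⟨LinearMap.injective_iff_surjective.mpr hsurj, hsurj⟩

namespace Abelianization

variable {G G' G'' : Type*} [Group G] [Group G'] [Group G'']

theorem of_surjective : Function.Surjective (of : G →* Abelianization G) :=
  QuotientGroup.mk_surjective

section CommRing

variable (K : Type*) [CommRing K]

noncomputable def baseChangeMap (ρ : G →* G') :
    K ⊗[ℤ] Additive (Abelianization G) →ₗ[K] K ⊗[ℤ] Additive (Abelianization G') :=
  ((MonoidHom.toAdditive (map ρ)).toIntLinearMap).baseChange K

@[simp]
theorem baseChangeMap_tmul (ρ : G →* G') (c : K) (g : G) :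
    baseChangeMap K ρ (c ⊗ₜ Additive.ofMul (of g)) = c ⊗ₜ Additive.ofMul (of (ρ g)) := rfl

theorem baseChangeMap_comp (ρ₂ : G' →* G'') (ρ₁ : G →* G') :
    baseChangeMap K (ρ₂.comp ρ₁) = baseChangeMap K ρ₂ ∘ₗ baseChangeMap K ρ₁ := by
  rw [baseChangeMap, baseChangeMap, baseChangeMap, ← LinearMap.baseChange_comp, ← map_comp]
  rfl

instance [Group.FG G] : Module.Finite K (K ⊗[ℤ] Additive (Abelianization G)) :=
  have : Group.FG (Abelianization G) := Group.fg_of_surjective of_surjective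
  have : Module.Finite ℤ (Additive (Abelianization G)) :=
    Module.Finite.iff_addGroup_fg.mpr inferInstance
  inferInstance

end CommRing

theorem baseChangeMap_surjective (K : Type*) [Field K] [CharZero K] (H : Subgroup G)
    [H.FiniteIndex] : Function.Surjective (baseChangeMap K H.subtype) := by
  rw [← LinearMap.range_eq_top, Submodule.eq_top_iff']
  intro z
  induction z using TensorProduct.induction_on with
  | zero => exact zero_mem _
  | add x y hx hy => exact add_mem hx hy
  | tmul c x =>
    obtain ⟨g, rfl⟩ := (Additive.ofMul.surjective.comp of_surjective) x
    obtain ⟨n, hn, -, hgn⟩ := Subgroup.exists_pow_mem_of_index_ne_zero H.index_ne_zero_of_finite g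
    refine ⟨((n : K)⁻¹ * c) ⊗ₜ Additive.ofMul (of ⟨g ^ n, hgn⟩), ?_⟩
    have hn' : (n : K) ≠ 0 := Nat.cast_ne_zero.mpr hn.ne'
    rw [baseChangeMap_tmul, Subgroup.coe_subtype, map_pow, ofMul_pow, TensorProduct.tmul_smul,
      TensorProduct.smul_tmul', nsmul_eq_mul, mul_inv_cancel_left₀ hn']
    rfl

end Abelianization

open Abelianization in
theorem hasEigenvalue_inducedEnd_restrictHom {G : Type*} [Group G] [Group.FG G] {φ : G →* G}
    {H : Subgroup G} [H.FiniteIndex] (hinv : ∀ x ∈ H, φ x ∈ H) {μ : ℂ}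
    (h : (inducedEnd φ).HasEigenvalue μ) :
    (inducedEnd (restrictHom φ H hinv)).HasEigenvalue μ :=
  h.of_surjective_of_comp_eq (baseChangeMap_surjective ℂ H) <| by
    change baseChangeMap ℂ H.subtype ∘ₗ baseChangeMap ℂ (restrictHom φ H hinv) =
      baseChangeMap ℂ φ ∘ₗ baseChangeMap ℂ H.subtype
    rw [← baseChangeMap_comp, ← baseChangeMap_comp]
    rfl

@[simp]
theorem inducedEnd_tmul {G : Type*} [Group G] (φ : G →* G) (c : ℂ) (g : G) :
    inducedEnd φ (c ⊗ₜ Additive.ofMul (Abelianization.of g)) =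
      c ⊗ₜ Additive.ofMul (Abelianization.of (φ g)) :=
  rfl

@[simp]
theorem cassonAut_of_false : cassonAut (FreeGroup.of false) = FreeGroup.of true := by
  simp [cassonAut]

@[simp]
theorem cassonAut_of_true :
    cassonAut (FreeGroup.of true) = FreeGroup.of false * FreeGroup.of true ^ 2 := by
  simp [cassonAut]

theorem abelianization_of_cassonAut_cassonAut (g : FreeGroup Bool) :
    Abelianization.of (cassonAut (cassonAut g)) =
      Abelianization.of (cassonAut g) ^ 2 * Abelianization.of g := by
  have : Abelianization.of.comp (cassonAut.comp cassonAut) =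
      (Abelianization.of.comp cassonAut) ^ 2 * Abelianization.of :=
    FreeGroup.ext_hom _ _ fun i => by cases i <;> simp [mul_pow, ← pow_mul, mul_comm]
  exact DFunLike.congr_fun this g

theorem inducedEnd_cassonAut_sq :
    inducedEnd cassonAut ^ 2 = 2 • inducedEnd cassonAut + 1 := by
  ext x
  obtain ⟨g, rfl⟩ := (Additive.ofMul.surjective.comp Abelianization.of_surjective) x
  simp [pow_two, abelianization_of_cassonAut_cassonAut, TensorProduct.tmul_add, two_smul]

theorem FreeAbelianGroup.basis_apply {α : Type*} (i : α) :
    FreeAbelianGroup.basis α i = FreeAbelianGroup.of i := by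
  simp [FreeAbelianGroup.basis]

theorem hasEigenvalue_inducedEnd_cassonAut_iff {μ : ℂ} :
    (inducedEnd cassonAut).HasEigenvalue μ ↔ μ ^ 2 = 2 * μ + 1 := by
  constructor
  · intro h
    obtain ⟨v, hv⟩ := h.exists_hasEigenvector
    have hsq := congr($inducedEnd_cassonAut_sq v)
    simp only [pow_two, Module.End.mul_apply, LinearMap.add_apply, LinearMap.smul_apply,
      Module.End.one_apply, hv.apply_eq_smul, map_smul] at hsq
    have hroot : (μ ^ 2 - (2 * μ + 1)) • v = 0 := by linear_combination (norm := module) hsq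
    exact sub_eq_zero.mp ((smul_eq_zero.mp hroot).resolve_right hv.2)
  · intro h
    let e : Module.Basis Bool ℂ (ℂ ⊗[ℤ] Additive (Abelianization (FreeGroup Bool))) :=
      (FreeAbelianGroup.basis Bool).baseChange ℂ
    have he (i : Bool) : e i = 1 ⊗ₜ Additive.ofMul (Abelianization.of (FreeGroup.of i)) :=
      (Module.Basis.baseChange_apply ..).trans (congrArg _ (FreeAbelianGroup.basis_apply i))
    have ha : inducedEnd cassonAut (e false) = e true := by
      rw [he, he, inducedEnd_tmul, cassonAut_of_false]
    have hb : inducedEnd cassonAut (e true) = e false + 2 • e true := by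
      rw [he, he, inducedEnd_tmul, cassonAut_of_true, map_mul, map_pow, ofMul_mul, ofMul_pow,
        TensorProduct.tmul_add, TensorProduct.tmul_smul]
    refine Module.End.hasEigenvalue_of_hasEigenvector (x := e false + μ • e true)
      ⟨Module.End.mem_eigenspace_iff.mpr ?_, fun h0 => ?_⟩
    · rw [map_add, map_smul, ha, hb]
      linear_combination (norm := module) (-h) • e true
    · have := congr(e.repr $h0 false)
      simp at this

theorem sq_eq_two_mul_add_one_iff {μ : ℂ} :
    μ ^ 2 = 2 * μ + 1 ↔ μ = ((1 + Real.sqrt 2 : ℝ) : ℂ) ∨ μ = ((1 - Real.sqrt 2 : ℝ) : ℂ) := by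
  have hsqrt : ((Real.sqrt 2 : ℝ) : ℂ) ^ 2 = 2 := by
    exact_mod_cast Real.sq_sqrt zero_le_two
  have hfac : μ ^ 2 - (2 * μ + 1) =
      (μ - ((1 + Real.sqrt 2 : ℝ) : ℂ)) * (μ - ((1 - Real.sqrt 2 : ℝ) : ℂ)) := by
    push_cast
    linear_combination hsqrt
  rw [← sub_eq_zero, hfac, mul_eq_zero, sub_eq_zero, sub_eq_zero]

theorem casson_example :
    specNZ cassonAut =
      {((1 + Real.sqrt 2 : ℝ) : ℂ), ((1 - Real.sqrt 2 : ℝ) : ℂ)} ∧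
    ∀ H : Subgroup (FreeGroup Bool), H.FiniteIndex →
      ∀ hinv : ∀ x ∈ H, cassonAut x ∈ H,
        Module.End.HasEigenvalue (inducedEnd (restrictHom cassonAut H hinv))
          ((1 + Real.sqrt 2 : ℝ) : ℂ) ∧
        Module.End.HasEigenvalue (inducedEnd (restrictHom cassonAut H hinv))
          ((1 - Real.sqrt 2 : ℝ) : ℂ) := by
  have hspec (μ : ℂ) : (inducedEnd cassonAut).HasEigenvalue μ ↔
      μ = ((1 + Real.sqrt 2 : ℝ) : ℂ) ∨ μ = ((1 - Real.sqrt 2 : ℝ) : ℂ) :=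
    hasEigenvalue_inducedEnd_cassonAut_iff.trans sq_eq_two_mul_add_one_iff
  refine ⟨Set.ext fun μ => ⟨fun h => (hspec μ).mp h.2, fun h => ⟨?_, (hspec μ).mpr h⟩⟩,
    fun H hH hinv => ?_⟩
  · have hμ := hasEigenvalue_inducedEnd_cassonAut_iff.mp ((hspec μ).mpr h)
    rintro rfl
    norm_num at hμ
  · exact ⟨hasEigenvalue_inducedEnd_restrictHom hinv ((hspec _).mpr (.inl rfl)),
      hasEigenvalue_inducedEnd_restrictHom hinv ((hspec _).mpr (.inr rfl))⟩
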